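/- arXiv:2101.05340 — 2 statements merged into one kernel-verified Lean document; each statement's English description precedes it below -/
import Mathlib

section
/- Let h : B → R be smooth on an open set B ⊆ R², with Hessian Q(J) and gradient ω(J) ≠ 0 at a point J. Then h is quasi-convex at J if and only if the 3×3 bordered Hessian matrix A = [[h_11, h_12, h_1],[h_12, h_22, h_2],[h_1, h_2, 0]] (evaluated at J) has nonzero determinant (isoenergetic non-degeneracy). -/
/-- For a smooth `h` on an open `B ⊆ ℝ²` with nonvanishing gradient at `J`,
quasi-convexity at `J` is equivalent to the nonvanishing of the determinant of
the 3×3 bordered Hessian `A = [[h₁₁,h₁₂,h₁],[h₁₂,h₂₂,h₂],[h₁,h₂,0]]`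
(isoenergetic non-degeneracy). -/
theorem quasiconvex_iff_bordered_hessian_det_ne_zero
    (B : Set (Fin 2 → ℝ)) (hB : IsOpen B)
    (h : (Fin 2 → ℝ) → ℝ) (hsmooth : ContDiffOn ℝ (⊤ : ℕ∞) h B)
    (J : Fin 2 → ℝ) (hJ : J ∈ B)
    (hgrad : fderiv ℝ h J ≠ 0) :
    (∀ u : Fin 2 → ℝ, fderiv ℝ h J u = 0 →
        (fderiv ℝ (fderiv ℝ h) J u) u = 0 → u = 0) ↔
      (Matrix.of
        ![![(fderiv ℝ (fderiv ℝ h) J (Pi.single 0 1)) (Pi.single 0 1),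
            (fderiv ℝ (fderiv ℝ h) J (Pi.single 0 1)) (Pi.single 1 1),
            fderiv ℝ h J (Pi.single 0 1)],
          ![(fderiv ℝ (fderiv ℝ h) J (Pi.single 0 1)) (Pi.single 1 1),
            (fderiv ℝ (fderiv ℝ h) J (Pi.single 1 1)) (Pi.single 1 1),
            fderiv ℝ h J (Pi.single 1 1)],
          ![fderiv ℝ h J (Pi.single 0 1),
            fderiv ℝ h J (Pi.single 1 1),
            0]]).det ≠ 0 := by
  set e0 : Fin 2 → ℝ := Pi.single 0 1 with he0
  set e1 : Fin 2 → ℝ := Pi.single 1 1 with he1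
  set g : (Fin 2 → ℝ) →L[ℝ] ℝ := fderiv ℝ h J with hg
  set D := fderiv ℝ (fderiv ℝ h) J with hD
  set a : ℝ := g e0 with ha
  set b : ℝ := g e1 with hb
  set q00 : ℝ := D e0 e0 with hq00
  set q01 : ℝ := D e0 e1 with hq01
  set q11 : ℝ := D e1 e1 with hq11
  -- symmetry of second derivative
  have hsymm : D e1 e0 = q01 := by
    have hC : ContDiffAt ℝ 2 h J :=
      ((hsmooth.contDiffAt (hB.mem_nhds hJ)).of_le (WithTop.coe_le_coe.mpr le_top))
    exact (hC.isSymmSndFDerivAt minSmoothness_of_isRCLikeNormedField.le).eq e1 e0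
  -- decomposition of vectors
  have hdecomp : ∀ u : Fin 2 → ℝ, u = u 0 • e0 + u 1 • e1 := by
    intro u
    funext i
    fin_cases i <;> simp [he0, he1]
  have hgu : ∀ u : Fin 2 → ℝ, g u = u 0 * a + u 1 * b := by
    intro u
    conv_lhs => rw [hdecomp u]
    simp [smul_eq_mul]
    rfl
  have hDuu : ∀ u : Fin 2 → ℝ,
      D u u = u 0 ^ 2 * q00 + 2 * (u 0 * u 1) * q01 + u 1 ^ 2 * q11 := by
    intro u
    conv_lhs => rw [hdecomp u]
    simp only [map_add, map_smul, ContinuousLinearMap.add_apply,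
      ContinuousLinearMap.smul_apply, smul_eq_mul, hsymm]
    ring
  -- determinant value
  have hdet : (Matrix.of
        ![![q00, q01, a], ![q01, q11, b], ![a, b, 0]]).det
      = 2 * a * b * q01 - q00 * b ^ 2 - q11 * a ^ 2 := by
    simp [Matrix.det_fin_three]
    ring
  set E : ℝ := q00 * b ^ 2 - 2 * a * b * q01 + q11 * a ^ 2 with hE
  have hdet' : (Matrix.of
        ![![q00, q01, a], ![q01, q11, b], ![a, b, 0]]).det = -E := by
    rw [hdet, hE]; ring
  -- (a, b) ≠ (0, 0)
  have hab : ¬ (a = 0 ∧ b = 0) := by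
    rintro ⟨ha0, hb0⟩
    apply hgrad
    ext u
    rw [← hg] at *
    simp only [ContinuousLinearMap.zero_apply]
    rw [hgu u, ha0, hb0]; ring
  rw [hdet']
  constructor
  · -- quasi-convexity → det ≠ 0
    intro hqc
    set v : Fin 2 → ℝ := b • e0 - a • e1 with hv
    have hv0 : v 0 = b := by simp [hv, he0, he1]
    have hv1 : v 1 = -a := by simp [hv, he0, he1]
    have hgv : g v = 0 := by rw [hgu v, hv0, hv1]; ring
    intro hdet0
    have hE0 : E = 0 := by
      have := neg_eq_zero.mp hdet0
      linarith [this]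
    have hDvv : D v v = 0 := by
      rw [hDuu v, hv0, hv1, ← hE0, hE]; ring
    have hvz : v = 0 := hqc v hgv hDvv
    apply hab
    have hva : -a = 0 := by rw [← hv1, hvz]; simp
    have hvb : b = 0 := by rw [← hv0, hvz]; simp
    exact ⟨by linarith, hvb⟩
  · -- det ≠ 0 → quasi-convexity
    intro hdet0 u hgu0 hDuu0
    have hEne : E ≠ 0 := fun hE0 => hdet0 (by rw [hE0, neg_zero])
    rw [hgu u] at hgu0
    rw [hDuu u] at hDuu0
    have h1 : u 1 ^ 2 * E = 0 := by
      rw [hE]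
      linear_combination a ^ 2 * hDuu0 +
        (q00 * (b * u 1 - a * u 0) - 2 * q01 * a * u 1) * hgu0
    have h0 : u 0 ^ 2 * E = 0 := by
      rw [hE]
      linear_combination b ^ 2 * hDuu0 +
        (q11 * (a * u 0 - b * u 1) - 2 * q01 * b * u 0) * hgu0
    have hu1 : u 1 = 0 := by
      have := (mul_eq_zero.mp h1).resolve_right hEne
      exact pow_eq_zero_iff (two_ne_zero) |>.mp this
    have hu0 : u 0 = 0 := by
      have := (mul_eq_zero.mp h0).resolve_right hEne
      exact pow_eq_zero_iff (two_ne_zero) |>.mp this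
    funext i
    fin_cases i <;> simp [hu0, hu1]
end

section
/- For any dimension n, quasi-convexity of a smooth h : B → R at J ∈ B implies isoenergetic non-degeneracy at J, i.e. the (n+1)×(n+1) bordered Hessian [[Q(J), ∇h(J)],[∇h(J)^T, 0]] has nonzero determinant. -/
lemma clm_apply_eq_sum_single {n : ℕ} (f : (Fin n → ℝ) →L[ℝ] ℝ) (u : Fin n → ℝ) :
    f u = ∑ i, u i * f (Pi.single i 1) := by
  conv_lhs => rw [← Finset.univ_sum_single u]
  rw [map_sum]
  refine Finset.sum_congr rfl fun i _ => ?_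
  have hs : (Pi.single i (u i) : Fin n → ℝ) = u i • (Pi.single i 1 : Fin n → ℝ) := by
    rw [← Pi.single_smul, smul_eq_mul, mul_one]
  rw [hs, map_smul, smul_eq_mul]

/-- In any dimension `n`, quasi-convexity of a smooth `h : B → ℝ` at `J ∈ B`
implies isoenergetic non-degeneracy at `J`: the `(n+1)×(n+1)` bordered Hessian
`[[Q(J), ∇h(J)],[∇h(J)ᵀ, 0]]` has nonzero determinant. -/
theorem quasiconvex_implies_isoenergetic_nondegenerate
    (n : ℕ) (B : Set (Fin n → ℝ)) (hB : IsOpen B)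
    (h : (Fin n → ℝ) → ℝ) (hsmooth : ContDiffOn ℝ (⊤ : ℕ∞) h B)
    (J : Fin n → ℝ) (hJ : J ∈ B)
    (hgrad : fderiv ℝ h J ≠ 0)
    (hqc : ∀ u : Fin n → ℝ, fderiv ℝ h J u = 0 →
      (fderiv ℝ (fderiv ℝ h) J u) u = 0 → u = 0) :
    (Matrix.fromBlocks
      (Matrix.of fun i j : Fin n =>
        (fderiv ℝ (fderiv ℝ h) J (Pi.single i 1)) (Pi.single j 1))
      (Matrix.of fun (i : Fin n) (_ : Fin 1) => fderiv ℝ h J (Pi.single i 1))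
      (Matrix.of fun (_ : Fin 1) (j : Fin n) => fderiv ℝ h J (Pi.single j 1))
      (0 : Matrix (Fin 1) (Fin 1) ℝ)).det ≠ 0 := by
  set g : Fin n → ℝ := fun i => fderiv ℝ h J (Pi.single i 1) with hg
  set Q : Fin n → Fin n → ℝ :=
    fun i j => (fderiv ℝ (fderiv ℝ h) J (Pi.single i 1)) (Pi.single j 1) with hQ
  intro hdet
  rw [← Matrix.exists_mulVec_eq_zero_iff] at hdet
  obtain ⟨v, hv0, hmv⟩ := hdet
  set u : Fin n → ℝ := fun i => v (Sum.inl i) with hu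
  set t : ℝ := v (Sum.inr 0) with ht
  -- row equations
  have hrow : ∀ i : Fin n, (∑ j, Q i j * u j) + g i * t = 0 := by
    intro i
    have := congrFun hmv (Sum.inl i)
    simpa [Matrix.mulVec, dotProduct, Fintype.sum_sum_type, Matrix.fromBlocks,
      Fin.sum_univ_one] using this
  have hlast : (∑ j, g j * u j) = 0 := by
    have := congrFun hmv (Sum.inr 0)
    simpa [Matrix.mulVec, dotProduct, Fintype.sum_sum_type, Matrix.fromBlocks,
      Fin.sum_univ_one] using this
  -- fderiv h J u = 0
  have hgu : fderiv ℝ h J u = 0 := by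
    rw [clm_apply_eq_sum_single]
    rw [← hlast]
    exact Finset.sum_congr rfl fun j _ => mul_comm _ _
  -- Hessian quadratic form vanishes
  have hQuu : (fderiv ℝ (fderiv ℝ h) J u) u = 0 := by
    have h1 : (fderiv ℝ (fderiv ℝ h) J u) u
        = ∑ i, u i * (fderiv ℝ (fderiv ℝ h) J (Pi.single i 1)) u := by
      have := clm_apply_eq_sum_single ((fderiv ℝ (fderiv ℝ h) J).flip u) u
      simpa using this
    rw [h1]
    have h2 : ∀ i : Fin n, (fderiv ℝ (fderiv ℝ h) J (Pi.single i 1)) u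
        = ∑ j, Q i j * u j := by
      intro i
      rw [clm_apply_eq_sum_single]
      exact Finset.sum_congr rfl fun j _ => mul_comm _ _
    calc ∑ i, u i * (fderiv ℝ (fderiv ℝ h) J (Pi.single i 1)) u
        = ∑ i, u i * (-(g i * t)) := by
          refine Finset.sum_congr rfl fun i _ => ?_
          rw [h2 i, eq_neg_of_add_eq_zero_left (hrow i)]
      _ = -t * ∑ i, u i * g i := by
          rw [Finset.mul_sum]; refine Finset.sum_congr rfl fun i _ => by ring
      _ = 0 := by
          have : (∑ i, u i * g i) = 0 := by
            rw [← hlast]; exact Finset.sum_congr rfl fun i _ => mul_comm _ _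
          rw [this, mul_zero]
  have hu0 : u = 0 := hqc u hgu hQuu
  -- then g i * t = 0 for all i, so t = 0 since g ≠ 0
  have ht0 : t = 0 := by
    by_contra htne
    have hgi : ∀ i, g i = 0 := by
      intro i
      have := hrow i
      rw [hu0] at this
      simp at this
      exact this.resolve_right htne
    apply hgrad
    ext x
    rw [clm_apply_eq_sum_single]
    simp only [show ∀ i, fderiv ℝ h J (Pi.single i 1) = 0 from hgi, mul_zero,
      Finset.sum_const_zero, ContinuousLinearMap.zero_apply]
  apply hv0
  funext k
  cases k with
  | inl i => have : u i = 0 := by rw [hu0]; rfl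
             simpa [hu] using this
  | inr j => have : j = 0 := Subsingleton.elim _ _
             rw [this]; simpa [ht] using ht0
end
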